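/- Orthonormality of the Terracini block (computational content of Proposition 4.1). Let C ∈ ℝ^{l₁×⋯×l_D} be an HOSVD core with vectorization c, let U_d ∈ ℝ^{n_d×l_d} have orthonormal columns, let U_d^⊥ ∈ ℝ^{n_d×(n_d−l_d)} have orthonormal columns with U_dᵀU_d^⊥ = 0 for each d = 1,…,D, and let S ⊂ ℝ^{l₁⋯l_D} be any finite orthonormal set. Then the following set of vectors in ℝ^{n₁⋯n_D} is orthonormal: { (U₁⊗⋯⊗U_D)ċ : ċ ∈ S } ∪ { (U₁⊗⋯⊗U_{d−1}⊗(U_d^⊥e_i(û_j^d)ᵀ)⊗U_{d+1}⊗⋯⊗U_D)c : d = 1,…,D, i = 1,…,n_d−l_d, j = 1,…,l_d }. Equivalently, the Terracini block T(C;U₁,…,U_D;S;(U_d^⊥)) has orthonormal columns. -/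

import Mathlib

open scoped BigOperators
open Matrix

noncomputable section

/-- Euclidean norm of a finitely-indexed real vector. -/
def enorm {ι : Type*} [Fintype ι] (x : ι → ℝ) : ℝ := Real.sqrt (∑ i, x i ^ 2)

/-- Smallest singular value of a real matrix, as the infimum of `‖M x‖` over
Euclidean-unit vectors `x`. -/
def sigmaMin {ι κ : Type*} [Fintype ι] [Fintype κ] (M : Matrix ι κ ℝ) : ℝ :=
  sInf { r | ∃ x : κ → ℝ, _root_.enorm x = 1 ∧ r = _root_.enorm (M.mulVec x) }

/-- Iterated Kronecker product `U 1 ⊗ ⋯ ⊗ U D`, with multi-indices as rows/columns. -/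
def bigKron {D : ℕ} {n l : Fin D → ℕ} (U : ∀ d, Matrix (Fin (n d)) (Fin (l d)) ℝ) :
    Matrix (∀ d, Fin (n d)) (∀ d, Fin (l d)) ℝ :=
  Matrix.of fun i j => ∏ d, U d (i d) (j d)

/-- Reassemble a full multi-index from a value `j` in slot `d` and a complementary index `i`. -/
def assemble {D : ℕ} {l : Fin D → ℕ} (d : Fin D) (j : Fin (l d))
    (i : ∀ d' : {x : Fin D // x ≠ d}, Fin (l d'.1)) : ∀ d', Fin (l d') :=
  fun d' => if h : d' = d then Fin.cast (congrArg l h.symm) j else i ⟨d', h⟩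

/-- The `d`-th flattening `C_(d)` of a tensor `c`, an `l d × ∏_{d' ≠ d} l d'` matrix. -/
def flatten {D : ℕ} {l : Fin D → ℕ} (c : (∀ d, Fin (l d)) → ℝ) (d : Fin D) :
    Matrix (Fin (l d)) (∀ d' : {x : Fin D // x ≠ d}, Fin (l d'.1)) ℝ :=
  Matrix.of fun j i => c (assemble d j i)

/-- `c` is an HOSVD core: each flattening has nonzero, pairwise orthogonal rows. -/
def IsHOSVDCore {D : ℕ} {l : Fin D → ℕ} (c : (∀ d, Fin (l d)) → ℝ) : Prop :=
  ∀ (d : Fin D) (j j' : Fin (l d)),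
    (j ≠ j' → ∑ i, flatten c d j i * flatten c d j' i = 0) ∧ flatten c d j ≠ 0

/-- `σ_j^d`, the norm of the `j`-th row of the `d`-th flattening. -/
def flatSigma {D : ℕ} {l : Fin D → ℕ} (c : (∀ d, Fin (l d)) → ℝ) (d : Fin D)
    (j : Fin (l d)) : ℝ :=
  enorm (flatten c d j)

/-- `û_j^d := (σ_j^d)⁻¹ e_j ∈ ℝ^{l d}`. -/
def uhat {D : ℕ} {l : Fin D → ℕ} (c : (∀ d, Fin (l d)) → ℝ) (d : Fin D) (j : Fin (l d)) :
    Fin (l d) → ℝ :=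
  fun k => if k = j then (flatSigma c d j)⁻¹ else 0

/-- The Terracini block `T(C; U₁,…,U_D; S; (U_d^⊥))`. -/
def terracini {D : ℕ} {n l : Fin D → ℕ} {ι : Type*}
    (c : (∀ d, Fin (l d)) → ℝ)
    (U : ∀ d, Matrix (Fin (n d)) (Fin (l d)) ℝ)
    (Uperp : ∀ d, Matrix (Fin (n d)) (Fin (n d - l d)) ℝ)
    (S : ι → ((∀ d, Fin (l d)) → ℝ)) :
    Matrix (∀ d, Fin (n d)) (ι ⊕ Σ d : Fin D, Fin (n d - l d) × Fin (l d)) ℝ :=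
  Matrix.of fun a col =>
    Sum.elim
      (fun s => (bigKron U).mulVec (S s) a)
      (fun p => (bigKron (Function.update U p.1
          (Matrix.of fun a' b' => Uperp p.1 a' p.2.1 * uhat c p.1 p.2.2 b'))).mulVec c a)
      col

/-- Concatenation of Terracini blocks over `r = 1,…,R`. -/
def terraciniConcat {D R : ℕ} {n : Fin D → ℕ} {ll : Fin R → Fin D → ℕ} {ι : Fin R → Type*}
    (c : ∀ r, (∀ d, Fin (ll r d)) → ℝ)
    (U : ∀ r d, Matrix (Fin (n d)) (Fin (ll r d)) ℝ)
    (Uperp : ∀ r d, Matrix (Fin (n d)) (Fin (n d - ll r d)) ℝ)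
    (S : ∀ r, ι r → ((∀ d, Fin (ll r d)) → ℝ)) :
    Matrix (∀ d, Fin (n d))
      (Σ r, (ι r ⊕ Σ d : Fin D, Fin (n d - ll r d) × Fin (ll r d))) ℝ :=
  Matrix.of fun a p => terracini (c p.1) (U p.1) (Uperp p.1) (S p.1) a p.2

/-- A linear subspace `𝒯` is GL-saturated at `c`. -/
def GLSaturated {D : ℕ} {l : Fin D → ℕ} (T : Submodule ℝ ((∀ d, Fin (l d)) → ℝ))
    (c : (∀ d, Fin (l d)) → ℝ) : Prop :=
  ∀ (d : Fin D) (A : Matrix (Fin (l d)) (Fin (l d)) ℝ),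
    (bigKron (Function.update (fun d' => (1 : Matrix (Fin (l d')) (Fin (l d')) ℝ)) d A)).mulVec c
      ∈ T

/-! Inner products of Kronecker-structured vectors factor slot by slot:
`(⊗ A_d) x ⬝ (⊗ B_d) y = x ⬝ (⊗ A_dᵀ B_d) y`. Since `U_dᵀ U_d = 1` and `U_dᵀ U_d^⊥ = 0`, two
columns that do not share both the perturbed slot `d` and the column `i` of `U_d^⊥` have a
vanishing factor (the `S`-columns have no perturbed slot), and `⊗ U_d` is an isometry on the
`S`-columns. Two columns `(d, i, j)`, `(d, i, j')` reduce to `(û_j^d)ᵀ C_(d) C_(d)ᵀ û_{j'}^d`, which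
is `δ_{j j'}` because the rows of `C_(d)` are orthogonal with norms `σ_j^d`. -/

open Function

section Kronecker

variable {D : ℕ}

lemma prod_one_apply_eq_one_apply {R α : Type*} [CommMonoidWithZero R] [Fintype α]
    {β : α → Type*} [∀ a, DecidableEq (β a)] (p q : ∀ a, β a) :
    ∏ a, (1 : Matrix (β a) (β a) R) (p a) (q a) = (1 : Matrix (∀ a, β a) (∀ a, β a) R) p q := by
  by_cases h : p = q
  · subst h
    simp
  · obtain ⟨a, ha⟩ := Function.ne_iff.mp h
    rw [one_apply_ne h]
    exact Finset.prod_eq_zero (Finset.mem_univ a) (one_apply_ne ha)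

lemma bigKron_one {l : Fin D → ℕ} :
    bigKron (fun d => (1 : Matrix (Fin (l d)) (Fin (l d)) ℝ)) = 1 :=
  ext fun p q => prod_one_apply_eq_one_apply p q

lemma bigKron_eq_zero {n l : Fin D → ℕ} {A : ∀ d, Matrix (Fin (n d)) (Fin (l d)) ℝ} (d : Fin D)
    (hA : A d = 0) : bigKron A = 0 :=
  ext fun p q => Finset.prod_eq_zero (Finset.mem_univ d) (by simp [hA])

lemma transpose_bigKron_mul_bigKron {n l m : Fin D → ℕ}
    (A : ∀ d, Matrix (Fin (n d)) (Fin (l d)) ℝ) (B : ∀ d, Matrix (Fin (n d)) (Fin (m d)) ℝ) :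
    (bigKron A)ᵀ * bigKron B = bigKron fun d => (A d)ᵀ * B d := by
  ext p q
  simp only [bigKron, mul_apply, transpose_apply, of_apply, ← Finset.prod_mul_distrib]
  exact (Fintype.prod_sum fun d a => A d a (p d) * B d a (q d)).symm

lemma transpose_bigKron_mul_self {n l : Fin D → ℕ} {U : ∀ d, Matrix (Fin (n d)) (Fin (l d)) ℝ}
    (hU : ∀ d, (U d)ᵀ * U d = 1) : (bigKron U)ᵀ * bigKron U = 1 := by
  simp only [transpose_bigKron_mul_bigKron, hU, bigKron_one]

lemma mulVec_dotProduct_mulVec {R m n k : Type*} [CommSemiring R] [Fintype m] [Fintype n]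
    [Fintype k] (A : Matrix m n R) (B : Matrix m k R) (x : n → R) (y : k → R) :
    (A *ᵥ x) ⬝ᵥ (B *ᵥ y) = x ⬝ᵥ ((Aᵀ * B) *ᵥ y) := by
  rw [← mulVec_mulVec, dotProduct_mulVec x, vecMul_transpose]

lemma bigKron_mulVec_dotProduct_eq_zero {n l m : Fin D → ℕ}
    {A : ∀ d, Matrix (Fin (n d)) (Fin (l d)) ℝ} {B : ∀ d, Matrix (Fin (n d)) (Fin (m d)) ℝ}
    (x : (∀ d, Fin (l d)) → ℝ) (y : (∀ d, Fin (m d)) → ℝ) (d : Fin D)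
    (hAB : (A d)ᵀ * B d = 0) : (bigKron A *ᵥ x) ⬝ᵥ (bigKron B *ᵥ y) = 0 := by
  rw [mulVec_dotProduct_mulVec, transpose_bigKron_mul_bigKron, bigKron_eq_zero d hAB,
    zero_mulVec, dotProduct_zero]

end Kronecker

section Factors

variable {R m n k p : Type*} [CommSemiring R] [Fintype m]

lemma transpose_mul_vecMulVec_eq_zero {U : Matrix m n R} {P : Matrix m k R} (h : Uᵀ * P = 0)
    (i : k) (v : p → R) : Uᵀ * vecMulVec (Pᵀ i) v = 0 := by
  have hcol : Uᵀ *ᵥ Pᵀ i = 0 := funext fun x => by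
    simpa [mul_apply, mulVec, dotProduct] using congrFun (congrFun h x) i
  rw [mul_vecMulVec, hcol, zero_vecMulVec]

lemma transpose_vecMulVec_mul_vecMulVec [DecidableEq k] {P : Matrix m k R} (h : Pᵀ * P = 1)
    (i i' : k) (v v' : p → R) :
    (vecMulVec (Pᵀ i) v)ᵀ * vecMulVec (Pᵀ i') v' = (1 : Matrix k k R) i i' • vecMulVec v v' := by
  rw [transpose_vecMulVec, vecMulVec_mul_vecMulVec, vecMulVec_smul, ← h, mul_apply']
  rfl

lemma transpose_update_mul_update {D : ℕ} {n l m : Fin D → ℕ}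
    (A : ∀ d, Matrix (Fin (n d)) (Fin (l d)) R) (B : ∀ d, Matrix (Fin (n d)) (Fin (m d)) R)
    (d : Fin D) (X : Matrix (Fin (n d)) (Fin (l d)) R) (Y : Matrix (Fin (n d)) (Fin (m d)) R) :
    (fun e => (update A d X e)ᵀ * update B d Y e) = update (fun e => (A e)ᵀ * B e) d (Xᵀ * Y) :=
  funext <| apply_update₂ (fun e (X : Matrix (Fin (n e)) (Fin (l e)) R) Y => Xᵀ * Y) A B d X Y

end Factors

section Flattening

variable {D : ℕ} {l : Fin D → ℕ}

lemma assemble_eq_piSplitAt_symm (d : Fin D) (j : Fin (l d))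
    (i : ∀ d' : {x : Fin D // x ≠ d}, Fin (l d'.1)) :
    assemble d j i = (Equiv.piSplitAt d fun d => Fin (l d)).symm (j, i) := by
  funext d'
  by_cases h : d' = d
  · subst h
    simp [assemble, Equiv.piSplitAt]
  · simp [assemble, Equiv.piSplitAt, h]

lemma assemble_self (d : Fin D) (j : Fin (l d))
    (i : ∀ d' : {x : Fin D // x ≠ d}, Fin (l d'.1)) : assemble d j i d = j := by
  simp [assemble_eq_piSplitAt_symm, Equiv.piSplitAt]

lemma sum_eq_sum_sum_assemble (d : Fin D) (f : (∀ d, Fin (l d)) → ℝ) :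
    ∑ p, f p = ∑ j, ∑ i, f (assemble d j i) := by
  simp only [assemble_eq_piSplitAt_symm, ← Fintype.sum_prod_type']
  exact ((Equiv.piSplitAt d _).symm.sum_comp f).symm

lemma bigKron_update_one_apply_assemble (d : Fin D) (M : Matrix (Fin (l d)) (Fin (l d)) ℝ)
    (j j' : Fin (l d)) (i i' : ∀ d' : {x : Fin D // x ≠ d}, Fin (l d'.1)) :
    bigKron (update (fun d => (1 : Matrix (Fin (l d)) (Fin (l d)) ℝ)) d M)
      (assemble d j i) (assemble d j' i') = M j j' * (1 : Matrix _ _ ℝ) i i' := by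
  rw [bigKron, of_apply, Fintype.prod_eq_mul_prod_subtype_ne _ d, update_self, assemble_self,
    assemble_self, ← prod_one_apply_eq_one_apply]
  congr 1
  refine Finset.prod_congr rfl fun e _ => ?_
  simp [assemble, e.2]

lemma dotProduct_bigKron_update_one_mulVec (x y : (∀ d, Fin (l d)) → ℝ) (d : Fin D)
    (M : Matrix (Fin (l d)) (Fin (l d)) ℝ) :
    x ⬝ᵥ (bigKron (update (fun d => (1 : Matrix (Fin (l d)) (Fin (l d)) ℝ)) d M) *ᵥ y)
      = ∑ j, ∑ j', M j j' * (flatten x d j ⬝ᵥ flatten y d j') := by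
  simp only [dotProduct, mulVec]
  simp_rw [sum_eq_sum_sum_assemble d, bigKron_update_one_apply_assemble, one_apply, mul_ite,
    mul_one, mul_zero, ite_mul, zero_mul, Finset.sum_ite_eq, Finset.mem_univ, if_true, flatten,
    of_apply, Finset.mul_sum]
  refine Finset.sum_congr rfl fun j _ => ?_
  rw [Finset.sum_comm]
  exact Finset.sum_congr rfl fun j' _ => Finset.sum_congr rfl fun i _ => by ring

end Flattening

section HOSVD

variable {D : ℕ} {l : Fin D → ℕ} {c : (∀ d, Fin (l d)) → ℝ}

lemma flatSigma_eq_sqrt (c : (∀ d, Fin (l d)) → ℝ) (d : Fin D) (j : Fin (l d)) :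
    flatSigma c d j = Real.sqrt (flatten c d j ⬝ᵥ flatten c d j) := by
  simp only [flatSigma, _root_.enorm, dotProduct, sq]

lemma IsHOSVDCore.flatSigma_pos (hc : IsHOSVDCore c) (d : Fin D) (j : Fin (l d)) :
    0 < flatSigma c d j := by
  rw [flatSigma_eq_sqrt]
  exact Real.sqrt_pos.2 <| (Finset.sum_nonneg fun i _ => mul_self_nonneg _).lt_of_ne'
    (dotProduct_self_eq_zero.not.2 (hc d j j).2)

lemma IsHOSVDCore.flatten_dotProduct (hc : IsHOSVDCore c) (d : Fin D) (j j' : Fin (l d)) :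
    flatten c d j ⬝ᵥ flatten c d j' = if j = j' then flatSigma c d j ^ 2 else 0 := by
  split_ifs with h
  · rw [h, flatSigma_eq_sqrt, Real.sq_sqrt]
    exact Finset.sum_nonneg fun i _ => mul_self_nonneg _
  · exact (hc d j j').1 h

lemma IsHOSVDCore.dotProduct_bigKron_update_one_uhat (hc : IsHOSVDCore c) (d : Fin D)
    (j j' : Fin (l d)) :
    c ⬝ᵥ (bigKron (update (fun d => (1 : Matrix (Fin (l d)) (Fin (l d)) ℝ)) d
      (vecMulVec (uhat c d j) (uhat c d j'))) *ᵥ c) = if j = j' then 1 else 0 := by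
  simp only [dotProduct_bigKron_update_one_mulVec, vecMulVec_apply, uhat, mul_ite, ite_mul,
    zero_mul, mul_zero, hc.flatten_dotProduct, Finset.sum_ite_eq, Finset.sum_ite_eq',
    Finset.mem_univ, if_true]
  rcases eq_or_ne j j' with rfl | h
  · have hσ := (hc.flatSigma_pos d j).ne'
    field_simp
  · simp [h, h.symm]

end HOSVD

section Columns

variable {D : ℕ} {n l : Fin D → ℕ} {ι : Type*} {c : (∀ d, Fin (l d)) → ℝ}
  {U : ∀ d, Matrix (Fin (n d)) (Fin (l d)) ℝ} {Uperp : ∀ d, Matrix (Fin (n d)) (Fin (n d - l d)) ℝ}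

lemma terracini_transpose_inl (S : ι → (∀ d, Fin (l d)) → ℝ) (s : ι) :
    (terracini c U Uperp S)ᵀ (Sum.inl s) = bigKron U *ᵥ S s :=
  rfl

lemma terracini_transpose_inr (S : ι → (∀ d, Fin (l d)) → ℝ) (d : Fin D) (i : Fin (n d - l d))
    (j : Fin (l d)) :
    (terracini c U Uperp S)ᵀ (Sum.inr ⟨d, i, j⟩)
      = bigKron (update U d (vecMulVec ((Uperp d)ᵀ i) (uhat c d j))) *ᵥ c :=
  rfl

lemma dotProduct_bigKron_update_perp_mulVec (hc : IsHOSVDCore c) (hU : ∀ d, (U d)ᵀ * U d = 1)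
    (hUperp : ∀ d, (Uperp d)ᵀ * Uperp d = 1) (d : Fin D) (i i' : Fin (n d - l d))
    (j j' : Fin (l d)) :
    (bigKron (update U d (vecMulVec ((Uperp d)ᵀ i) (uhat c d j))) *ᵥ c) ⬝ᵥ
      (bigKron (update U d (vecMulVec ((Uperp d)ᵀ i') (uhat c d j'))) *ᵥ c)
      = if i = i' ∧ j = j' then 1 else 0 := by
  rw [mulVec_dotProduct_mulVec, transpose_bigKron_mul_bigKron, transpose_update_mul_update,
    transpose_vecMulVec_mul_vecMulVec (hUperp d)]
  simp only [hU]
  rcases eq_or_ne i i' with rfl | hi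
  · rw [one_apply_eq, one_smul, hc.dotProduct_bigKron_update_one_uhat]
    simp
  · rw [one_apply_ne hi, zero_smul, bigKron_eq_zero d (update_self ..), zero_mulVec,
      dotProduct_zero]
    simp [hi]

end Columns

theorem terracini_block_orthonormal_columns_general
    {D : ℕ} {n l : Fin D → ℕ} {ι : Type} [DecidableEq ι]
    (c : (∀ d, Fin (l d)) → ℝ)
    (hc : IsHOSVDCore c)
    (U : ∀ d, Matrix (Fin (n d)) (Fin (l d)) ℝ)
    (hU : ∀ d, (U d)ᵀ * U d = 1)
    (Uperp : ∀ d, Matrix (Fin (n d)) (Fin (n d - l d)) ℝ)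
    (hUperp : ∀ d, (Uperp d)ᵀ * Uperp d = 1)
    (hUUperp : ∀ d, (U d)ᵀ * Uperp d = 0)
    (S : ι → ((∀ d, Fin (l d)) → ℝ))
    (hSorth : ∀ s s', ∑ i, S s i * S s' i = if s = s' then 1 else 0) :
    (terracini c U Uperp S)ᵀ * terracini c U Uperp S = 1 := by
  have hUX (d : Fin D) (i : Fin (n d - l d)) (j : Fin (l d)) :=
    transpose_mul_vecMulVec_eq_zero (hUUperp d) i (uhat c d j)
  have hXU (d : Fin D) (i : Fin (n d - l d)) (j : Fin (l d)) :
      (vecMulVec ((Uperp d)ᵀ i) (uhat c d j))ᵀ * U d = 0 := by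
    rw [← transpose_transpose (U d), ← transpose_mul, hUX, transpose_zero]
  ext col col'
  change (terracini c U Uperp S)ᵀ col ⬝ᵥ (terracini c U Uperp S)ᵀ col'
    = (1 : Matrix _ _ ℝ) col col'
  rcases col with s | ⟨d, i, j⟩ <;> rcases col' with s' | ⟨d', i', j'⟩ <;>
    simp only [terracini_transpose_inl, terracini_transpose_inr]
  · rw [mulVec_dotProduct_mulVec, transpose_bigKron_mul_self hU, one_mulVec]
    exact (hSorth s s').trans (by simp [one_apply])
  · rw [one_apply_ne Sum.inl_ne_inr]
    exact bigKron_mulVec_dotProduct_eq_zero _ _ d' (by rw [update_self]; exact hUX d' i' j')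
  · rw [one_apply_ne Sum.inr_ne_inl]
    exact bigKron_mulVec_dotProduct_eq_zero _ _ d (by rw [update_self]; exact hXU d i j)
  · rcases eq_or_ne d d' with rfl | hd
    · rw [dotProduct_bigKron_update_perp_mulVec hc hU hUperp]
      simp [one_apply]
    · rw [one_apply_ne (by simp [hd])]
      exact bigKron_mulVec_dotProduct_eq_zero _ _ d
        (by rw [update_self, update_of_ne hd]; exact hXU d i j)

/-- **Proposition 4.1 (computational content).** If `C` is an HOSVD core, the `U_d` have
orthonormal columns, the `U_d^⊥` are admissible orthonormal complements, and `S` is a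
finite orthonormal set, then the Terracini block `T(C; U₁,…,U_D; S; (U_d^⊥))` has
orthonormal columns. -/
theorem terracini_block_orthonormal_columns
    {D : ℕ} {n l : Fin D → ℕ} {ι : Type} [Fintype ι] [DecidableEq ι]
    (c : (∀ d, Fin (l d)) → ℝ)
    (hc : IsHOSVDCore c)
    (U : ∀ d, Matrix (Fin (n d)) (Fin (l d)) ℝ)
    (hU : ∀ d, (U d)ᵀ * U d = 1)
    (Uperp : ∀ d, Matrix (Fin (n d)) (Fin (n d - l d)) ℝ)
    (hUperp : ∀ d, (Uperp d)ᵀ * Uperp d = 1)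
    (hUUperp : ∀ d, (U d)ᵀ * Uperp d = 0)
    (S : ι → ((∀ d, Fin (l d)) → ℝ))
    (hSorth : ∀ s s', ∑ i, S s i * S s' i = if s = s' then 1 else 0) :
    (terracini c U Uperp S)ᵀ * terracini c U Uperp S = 1 :=
  terracini_block_orthonormal_columns_general c hc U hU Uperp hUperp hUUperp S hSorth
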